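/- arXiv:math/9606232 — 7 statements merged into one kernel-verified Lean document; each statement's English description precedes it below -/
import Mathlib

section
/- A finite family F of intervals on a line is redundant if and only if there exists an interval s such that every point of s belongs to at least two intervals of F|s. -/
open scoped Classical

/-- A finite family of sets is irredundant if its members can be arranged in a
sequence such that each set contains a point not in any of the preceding sets. -/
def Irredundant (F : Finset (Set ℤ)) : Prop :=
  ∃ l : List (Set ℤ), l.Nodup ∧ l.toFinset = F ∧
    ∀ i : Fin l.length, ∃ x ∈ l.get i, ∀ j : Fin l.length, j < i → x ∉ l.get j

/-- An interval is a nonempty half-open integer interval `[a,b)`. -/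
def IsItv (s : Set ℤ) : Prop := ∃ a b : ℤ, a < b ∧ s = Set.Ico a b

/-- `F|s`: the members of `F` contained in `s`. -/
noncomputable def Res (F : Finset (Set ℤ)) (s : Set ℤ) : Finset (Set ℤ) :=
  F.filter (fun f => f ⊆ s)

/-- `N_x F`: the number of members of `F` containing `x`. -/
noncomputable def Nx (F : Finset (Set ℤ)) (x : ℤ) : ℕ :=
  (F.filter (fun f => x ∈ f)).card

/-!
An ordering witnessing irredundance is built backwards: a family is irredundant iff every
nonempty subfamily has a member with a private point (one lying in no other member of the
subfamily), since such a member can be put last, and conversely the last member of a subfamily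
in an irredundant ordering has one.

So `F` is redundant iff some nonempty subfamily `G` covers every point of its union twice. For
intervals, the maximal interval `s ⊆ ⋃ G` around a member of `G` is then bad: every member of
`G` meeting `s` lies inside `s`. Conversely, for a bad interval `s` the subfamily `F|s` is such a `G`.
-/

open Set

lemma mem_Res {F : Finset (Set ℤ)} {s f : Set ℤ} : f ∈ Res F s ↔ f ∈ F ∧ f ⊆ s :=
  Finset.mem_filter

lemma Res_mono {G F : Finset (Set ℤ)} (h : G ⊆ F) (s : Set ℤ) : Res G s ⊆ Res F s :=
  Finset.filter_subset_filter _ h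

lemma Nx_mono {G F : Finset (Set ℤ)} (h : G ⊆ F) (x : ℤ) : Nx G x ≤ Nx F x :=
  Finset.card_le_card (Finset.filter_subset_filter _ h)

lemma Nx_le_one_iff {G : Finset (Set ℤ)} {g : Set ℤ} {x : ℤ} (hg : g ∈ G) (hx : x ∈ g) :
    Nx G x ≤ 1 ↔ ∀ h ∈ G, x ∈ h → h = g := by
  simp only [Nx, Finset.card_le_one, Finset.mem_filter]
  exact ⟨fun H h hh hxh => H h ⟨hh, hxh⟩ g ⟨hg, hx⟩,
    fun H h₁ h₁G h₂ h₂G => (H h₁ h₁G.1 h₁G.2).trans (H h₂ h₂G.1 h₂G.2).symm⟩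

lemma Nx_Res_eq {G : Finset (Set ℤ)} {s : Set ℤ} {x : ℤ}
    (h : ∀ g ∈ G, x ∈ g → g ⊆ s) :
    Nx (Res G s) x = Nx G x := by
  unfold Nx Res
  rw [Finset.filter_filter]
  exact congrArg Finset.card
    (Finset.filter_congr fun g hg => ⟨And.right, fun hx => ⟨h g hg hx, hx⟩⟩)

lemma irredundant_empty : Irredundant ∅ :=
  ⟨[], List.nodup_nil, rfl, fun i => i.elim0⟩

lemma Irredundant.insert {F : Finset (Set ℤ)} {f : Set ℤ} {x : ℤ} (hF : Irredundant F)
    (hx : x ∈ f) (hxF : ∀ g ∈ F, x ∉ g) : Irredundant (insert f F) := by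
  obtain ⟨l, hnd, rfl, hwit⟩ := hF
  have hxl : ∀ g ∈ l, x ∉ g := fun g hg => hxF g (List.mem_toFinset.2 hg)
  have hget : ∀ j : Fin (l ++ [f]).length, ∀ hj : (j : ℕ) < l.length,
      (l ++ [f]).get j = l.get ⟨j, hj⟩ := fun j hj => List.getElem_append_left hj
  refine ⟨l ++ [f], ?_, ?_, fun i => ?_⟩
  · exact hnd.append (List.nodup_singleton f)
      (List.disjoint_singleton.2 fun hfl => hxl f hfl hx)
  · ext g
    simp
  have hi : (i : ℕ) < l.length + 1 := by simpa using i.2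
  rcases Nat.lt_or_ge i l.length with hil | hil
  · obtain ⟨y, hy, hyj⟩ := hwit ⟨i, hil⟩
    refine ⟨y, by rwa [hget i hil], fun j hji => ?_⟩
    rw [hget j ((Fin.lt_def.1 hji).trans hil)]
    exact hyj _ hji
  · have hlast : (l ++ [f]).get i = f := by
      simp [List.getElem_append_right hil, show (i : ℕ) - l.length = 0 by omega]
    refine ⟨x, by rw [hlast]; exact hx, fun j hji => ?_⟩
    rw [hget j (by have := Fin.lt_def.1 hji; omega)]
    exact hxl _ (List.get_mem _ _)

lemma Irredundant.exists_Nx_lt_two {F G : Finset (Set ℤ)} (hF : Irredundant F) (hGF : G ⊆ F)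
    (hG : G.Nonempty) : ∃ g ∈ G, ∃ x ∈ g, Nx G x < 2 := by
  obtain ⟨l, -, rfl, hwit⟩ := hF
  have hindex : ∀ g ∈ G, ∃ i : Fin l.length, l.get i = g := fun g hg =>
    List.mem_iff_get.1 (List.mem_toFinset.1 (hGF hg))
  let I : Finset (Fin l.length) := Finset.univ.filter (fun i => l.get i ∈ G)
  have hI : I.Nonempty := by
    obtain ⟨g, hg⟩ := hG
    obtain ⟨i, rfl⟩ := hindex g hg
    exact ⟨i, by simpa [I] using hg⟩
  have hiG : l.get (I.max' hI) ∈ G := (Finset.mem_filter.1 (I.max'_mem hI)).2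
  obtain ⟨x, hx, hxprev⟩ := hwit (I.max' hI)
  refine ⟨_, hiG, x, hx, Nat.lt_succ_of_le ((Nx_le_one_iff hiG hx).2 fun h hh hxh => ?_)⟩
  obtain ⟨j, rfl⟩ := hindex h hh
  rcases (I.le_max' j (by simpa [I] using hh)).lt_or_eq with hj | hj
  · exact absurd hxh (hxprev j hj)
  · rw [hj]

lemma irredundant_of_forall_exists_Nx_lt_two {F : Finset (Set ℤ)}
    (h : ∀ G ⊆ F, G.Nonempty → ∃ g ∈ G, ∃ x ∈ g, Nx G x < 2) : Irredundant F := by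
  induction F using Finset.strongInduction with
  | H F ih =>
    rcases F.eq_empty_or_nonempty with rfl | hne
    · exact irredundant_empty
    obtain ⟨g, hg, x, hx, hNx⟩ := h F subset_rfl hne
    have herase : Irredundant (F.erase g) :=
      ih _ (Finset.erase_ssubset hg) fun G hG => h G (hG.trans (Finset.erase_subset g F))
    rw [← Finset.insert_erase hg]
    refine herase.insert hx fun h hh hxh => Finset.ne_of_mem_erase hh ?_
    exact (Nx_le_one_iff hg hx).1 (Nat.le_of_lt_succ hNx) h (Finset.mem_of_mem_erase hh) hxh

theorem irredundant_iff_forall_exists_Nx_lt_two {F : Finset (Set ℤ)} :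
    Irredundant F ↔ ∀ G ⊆ F, G.Nonempty → ∃ g ∈ G, ∃ x ∈ g, Nx G x < 2 :=
  ⟨fun hF _ hGF hG => hF.exists_Nx_lt_two hGF hG, irredundant_of_forall_exists_Nx_lt_two⟩

lemma Ico_subset_Ico_of_mem {p q c d x : ℤ} (hxpq : x ∈ Ico p q) (hxcd : x ∈ Ico c d)
    (hc : c - 1 ∉ Ico p q) (hd : d ∉ Ico p q) : Ico p q ⊆ Ico c d := by
  simp only [mem_Ico, not_and_or, not_le, not_lt] at *
  exact Ico_subset_Ico (by omega) (by omega)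

lemma Set.Finite.exists_maximal_Ico_subset {U : Set ℤ} (hU : U.Finite) {a b : ℤ}
    (hab : Ico a b ⊆ U) :
    ∃ c d, c ≤ a ∧ b ≤ d ∧ Ico c d ⊆ U ∧ c - 1 ∉ U ∧ d ∉ U := by
  obtain ⟨m, hm⟩ := hU.bddBelow
  obtain ⟨M, hM⟩ := hU.bddAbove
  have hbelow : ∃ y, y < a ∧ y ∉ U :=
    ⟨min (a - 1) (m - 1), by omega, fun h => by have := hm h; omega⟩
  have habove : ∃ y, b ≤ y ∧ y ∉ U :=
    ⟨max b (M + 1), by omega, fun h => by have := hM h; omega⟩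
  obtain ⟨c', ⟨hc'a, hc'U⟩, hc'max⟩ :=
    Int.exists_greatest_of_bdd ⟨a, fun z hz => hz.1.le⟩ hbelow
  obtain ⟨d, ⟨hbd, hdU⟩, hdmin⟩ := Int.exists_least_of_bdd ⟨b, fun z hz => hz.1⟩ habove
  refine ⟨c' + 1, d, by omega, hbd, fun z ⟨hcz, hzd⟩ => ?_, by simpa using hc'U, hdU⟩
  by_contra hzU
  rcases lt_or_ge z a with hza | hza
  · linarith [hc'max z ⟨hza, hzU⟩]
  rcases lt_or_ge z b with hzb | hzb
  · exact hzU (hab ⟨hza, hzb⟩)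
  · linarith [hdmin z ⟨hzb, hzU⟩]

lemma exists_bad_interval {G : Finset (Set ℤ)} (hG : ∀ g ∈ G, IsItv g) (hne : G.Nonempty)
    (hdouble : ∀ g ∈ G, ∀ x ∈ g, 2 ≤ Nx G x) :
    ∃ s : Set ℤ, IsItv s ∧ ∀ x ∈ s, 2 ≤ Nx (Res G s) x := by
  obtain ⟨f, hf⟩ := hne
  obtain ⟨a, b, hab, rfl⟩ := hG f hf
  have hU : (⋃ g ∈ G, g).Finite := G.finite_toSet.biUnion fun g hg => by
    obtain ⟨p, q, -, rfl⟩ := hG g hg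
    exact finite_Ico p q
  obtain ⟨c, d, hca, hbd, hcdU, hc, hd⟩ :=
    hU.exists_maximal_Ico_subset (subset_biUnion_of_mem hf)
  refine ⟨Ico c d, ⟨c, d, by omega, rfl⟩, fun x hx => ?_⟩
  have hinside : ∀ g ∈ G, x ∈ g → g ⊆ Ico c d := fun g hg hxg => by
    obtain ⟨p, q, -, rfl⟩ := hG g hg
    exact Ico_subset_Ico_of_mem hxg hx (fun h => hc (mem_biUnion hg h))
      (fun h => hd (mem_biUnion hg h))
  obtain ⟨g, hg, hxg⟩ := mem_iUnion₂.1 (hcdU hx)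
  rw [Nx_Res_eq hinside]
  exact hdouble g hg x hxg

/-- A finite family of intervals is redundant iff there is an interval `s` such that
every point of `s` belongs to at least two intervals of `F|s`. -/
theorem redundant_iff_exists_bad_interval (F : Finset (Set ℤ))
    (hF : ∀ f ∈ F, IsItv f) :
    ¬ Irredundant F ↔ ∃ s : Set ℤ, IsItv s ∧ ∀ x ∈ s, 2 ≤ Nx (Res F s) x := by
  rw [irredundant_iff_forall_exists_Nx_lt_two]
  push Not
  constructor
  · rintro ⟨G, hGF, hne, hdouble⟩
    obtain ⟨s, hs, hbad⟩ := exists_bad_interval (fun g hg => hF g (hGF hg)) hne hdouble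
    exact ⟨s, hs, fun x hx => (hbad x hx).trans (Nx_mono (Res_mono hGF s) x)⟩
  · rintro ⟨s, ⟨a, b, hab, rfl⟩, hbad⟩
    have hne : (Res F (Ico a b)).Nonempty := by
      obtain ⟨g, hg, -⟩ := Finset.one_lt_card.1 (hbad a ⟨le_rfl, hab⟩)
      exact ⟨g, (Finset.mem_filter.1 hg).1⟩
    exact ⟨Res F (Ico a b), Finset.filter_subset _ _, hne,
      fun g hg x hx => hbad x ((mem_Res.1 hg).2 hx)⟩
end

section
/- If F₀ is a minimal redundant family of intervals on a line, then ⋃F₀ is a single interval. -/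
open scoped Classical

lemma irred_union (A B : Finset (Set ℤ)) (hd : Disjoint A B)
    (hsep : ∀ f ∈ A, ∀ g ∈ B, ∀ x : ℤ, x ∈ g → x ∉ f)
    (hA : Irredundant A) (hB : Irredundant B) : Irredundant (A ∪ B) := by
  obtain ⟨la, hna, hta, hwa⟩ := hA
  obtain ⟨lb, hnb, htb, hwb⟩ := hB
  refine ⟨la ++ lb, ?_, ?_, ?_⟩
  · refine List.Nodup.append hna hnb ?_
    intro s hsa hsb
    exact Finset.disjoint_left.1 hd (hta ▸ List.mem_toFinset.2 hsa)
      (htb ▸ List.mem_toFinset.2 hsb)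
  · rw [List.toFinset_append, hta, htb]
  · intro i
    rcases lt_or_ge i.val la.length with hi | hi
    · obtain ⟨x, hx, hcl⟩ := hwa ⟨i.val, hi⟩
      refine ⟨x, ?_, ?_⟩
      · simpa [List.get_eq_getElem, List.getElem_append_left hi] using hx
      · intro j hj
        have hjlt : j.val < la.length := lt_of_lt_of_le hj hi.le
        have := hcl ⟨j.val, hjlt⟩ hj
        simpa [List.get_eq_getElem, List.getElem_append_left hjlt] using this
    · have hk : i.val - la.length < lb.length := by
        have := i.isLt; simp [List.length_append] at this; omega
      obtain ⟨x, hx, hcl⟩ := hwb ⟨i.val - la.length, hk⟩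
      have hxi : x ∈ (la ++ lb).get i := by
        simpa [List.get_eq_getElem, List.getElem_append_right hi] using hx
      refine ⟨x, hxi, ?_⟩
      intro j hj
      rcases lt_or_ge j.val la.length with hjl | hjl
      · have hgB : lb[i.val - la.length] ∈ B :=
          htb ▸ List.mem_toFinset.2 (List.getElem_mem _)
        have hfA : la[j.val] ∈ A :=
          hta ▸ List.mem_toFinset.2 (List.getElem_mem _)
        have := hsep _ hfA _ hgB x hx
        simpa [List.get_eq_getElem, List.getElem_append_left hjl] using this
      · have hjk : j.val - la.length < lb.length := by
          have := j.isLt; simp [List.length_append] at this; omega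
        have hlt : (⟨j.val - la.length, hjk⟩ : Fin lb.length) < ⟨i.val - la.length, hk⟩ := by
          have : j.val < i.val := hj
          simp [Fin.lt_def]; omega
        have := hcl ⟨j.val - la.length, hjk⟩ hlt
        simpa [List.get_eq_getElem, List.getElem_append_right hjl] using this

lemma itv_convex {f : Set ℤ} (hf : IsItv f) {x y z : ℤ}
    (hx : x ∈ f) (hz : z ∈ f) (h1 : x ≤ y) (h2 : y ≤ z) : y ∈ f := by
  obtain ⟨a, b, -, rfl⟩ := hf
  simp only [Set.mem_Ico] at *
  omega

/-- If `F₀` is a minimal redundant family of intervals, then `⋃ F₀` is a single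
interval. -/
theorem sUnion_minimal_redundant_isInterval (F₀ : Finset (Set ℤ))
    (hF : ∀ f ∈ F₀, IsItv f)
    (hred : ¬ Irredundant F₀) (hmin : ∀ F ⊂ F₀, Irredundant F) :
    IsItv (⋃₀ (↑F₀ : Set (Set ℤ))) := by
  set U : Set ℤ := ⋃₀ (↑F₀ : Set (Set ℤ)) with hU
  -- F₀ is nonempty
  have hne : F₀.Nonempty := by
    rcases F₀.eq_empty_or_nonempty with rfl | h
    · exact absurd ⟨[], List.nodup_nil, by simp, fun i => absurd i.isLt (by simp)⟩ hred
    · exact h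
  -- U is nonempty
  have hUne : U.Nonempty := by
    obtain ⟨f, hf0⟩ := hne
    obtain ⟨a, b, hab, rfl⟩ := hF f hf0
    exact ⟨a, Set.mem_sUnion.2 ⟨_, hf0, Set.mem_Ico.2 ⟨le_refl a, hab⟩⟩⟩
  -- U is convex
  have hconv : ∀ x y z : ℤ, x ∈ U → z ∈ U → x ≤ y → y ≤ z → y ∈ U := by
    intro x y z hx hz hxy hyz
    by_contra hyU
    obtain ⟨fx, hfxF, hxfx⟩ := Set.mem_sUnion.1 hx
    obtain ⟨fz, hfzF, hzfz⟩ := Set.mem_sUnion.1 hz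
    set A : Finset (Set ℤ) := F₀.filter (fun f => f ⊆ Set.Iic y) with hA
    set B : Finset (Set ℤ) := F₀.filter (fun f => ¬ f ⊆ Set.Iic y) with hB
    -- every member not contained in Iic y lies entirely above y
    have hBup : ∀ g ∈ B, ∀ t ∈ g, y < t := by
      intro g hg t ht
      simp only [hB, Finset.mem_filter] at hg
      obtain ⟨hgF, hgn⟩ := hg
      obtain ⟨p, hpg, hpy⟩ : ∃ p ∈ g, ¬ p ≤ y := by
        by_contra h; push_neg at h; exact hgn (fun p hp => h p hp)
      push_neg at hpy
      by_contra htly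
      push_neg at htly
      exact hyU (Set.mem_sUnion.2 ⟨g, hgF, itv_convex (hF g hgF) ht hpg htly hpy.le⟩)
    have hfxA : fx ∈ A := by
      simp only [hA, Finset.mem_filter]
      refine ⟨hfxF, fun t ht => ?_⟩
      by_contra hty
      simp only [Set.mem_Iic, not_le] at hty
      exact hyU (Set.mem_sUnion.2 ⟨fx, hfxF, itv_convex (hF fx hfxF) hxfx ht hxy hty.le⟩)
    have hfzB : fz ∈ B := by
      simp only [hB, Finset.mem_filter]
      refine ⟨hfzF, fun hsub => ?_⟩
      have hzy : z ≤ y := hsub hzfz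
      have : y = z := le_antisymm hyz hzy
      exact hyU (Set.mem_sUnion.2 ⟨fz, hfzF, this ▸ hzfz⟩)
    have hdisj : Disjoint A B := by
      simp only [hA, hB]
      exact Finset.disjoint_filter_filter_not F₀ F₀ _
    have hunion : A ∪ B = F₀ := by
      simp only [hA, hB]
      exact Finset.filter_union_filter_not_eq _ F₀
    have hAsub : A ⊂ F₀ := by
      refine ⟨Finset.filter_subset _ _, fun hsub => ?_⟩
      have := hsub hfzF
      simp only [hA, Finset.mem_filter, hB] at this hfzB
      exact hfzB.2 this.2
    have hBsub : B ⊂ F₀ := by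
      refine ⟨Finset.filter_subset _ _, fun hsub => ?_⟩
      have := hsub hfxF
      simp only [hB, Finset.mem_filter, hA] at this hfxA
      exact this.2 hfxA.2
    have hsep : ∀ f ∈ A, ∀ g ∈ B, ∀ t : ℤ, t ∈ g → t ∉ f := by
      intro f hf g hg t htg htf
      have h1 : y < t := hBup g hg t htg
      have h2 : t ≤ y := by
        simp only [hA, Finset.mem_filter] at hf
        exact hf.2 htf
      omega
    exact hred (hunion ▸ irred_union A B hdisj hsep (hmin A hAsub) (hmin B hBsub))
  -- U is finite
  have hfin : U.Finite := by
    apply Set.Finite.sUnion (Finset.finite_toSet F₀)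
    intro f hf
    obtain ⟨a, b, -, rfl⟩ := hF f (by exact_mod_cast hf)
    exact Set.finite_Ico a b
  -- conclude
  obtain ⟨s, hs⟩ := hfin.exists_finset_coe
  have hsne : s.Nonempty := by
    obtain ⟨u, hu⟩ := hUne
    exact ⟨u, by rw [← Finset.mem_coe, hs]; exact hu⟩
  set m := s.min' hsne
  set M := s.max' hsne
  refine ⟨m, M + 1, ?_, ?_⟩
  · have : m ≤ M := s.min'_le _ (s.max'_mem hsne)
    omega
  · ext t
    simp only [Set.mem_Ico]
    constructor
    · intro ht
      have ht' : t ∈ s := by rw [← Finset.mem_coe, hs]; exact ht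
      exact ⟨s.min'_le _ ht', by have := s.le_max' _ ht'; omega⟩
    · rintro ⟨h1, h2⟩
      have hm : m ∈ U := by rw [← hs]; exact s.min'_mem hsne
      have hM : M ∈ U := by rw [← hs]; exact s.max'_mem hsne
      exact hconv m t M hm hM h1 (by omega)
end

section
/- Let s be a minimal bad interval for a finite family F of intervals, and let [a₁,b₁), ..., [a_k,b_k) be the maximal intervals of F|s ordered by a₁ < ... < a_k (equivalently b₁ < ... < b_k). Then a_{j+1} < b_j for all 1 ≤ j < k. -/
open scoped Classical

/-- `s` is a good interval for `F` if some point of `s` lies in at most one member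
of `F|s`. -/
def Good (F : Finset (Set ℤ)) (s : Set ℤ) : Prop :=
  IsItv s ∧ ∃ x ∈ s, Nx (Res F s) x ≤ 1

/-- `s` is a bad interval for `F` if every point of `s` lies in at least two members
of `F|s`. -/
def Bad (F : Finset (Set ℤ)) (s : Set ℤ) : Prop :=
  IsItv s ∧ ∀ x ∈ s, 2 ≤ Nx (Res F s) x

/-- `s` is a minimal bad interval: `s` is bad and every proper subinterval is good. -/
def MinBad (F : Finset (Set ℤ)) (s : Set ℤ) : Prop :=
  Bad F s ∧ ∀ t, IsItv t → t ⊆ s → t ≠ s → Good F t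

/-- `a b : ℕ → ℤ` enumerate (for indices `< k`) the maximal intervals
`[a₁,b₁),…,[a_k,b_k)` of `F|s`, with strictly increasing left and right endpoints,
and every member of `F|s` is contained in one of them. -/
def MaxEnum (F : Finset (Set ℤ)) (s : Set ℤ) (k : ℕ) (a b : ℕ → ℤ) : Prop :=
  0 < k ∧
  (∀ i < k, a i < b i) ∧
  (∀ i j, i < j → j < k → a i < a j ∧ b i < b j) ∧
  (∀ i < k, Set.Ico (a i) (b i) ∈ Res F s) ∧
  (∀ f ∈ Res F s, ∃ i < k, f ⊆ Set.Ico (a i) (b i))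

/-- The Franzblau–Kleitman reduction `F↓s`: remove the maximal intervals
`[a₁,b₁),…,[a_k,b_k)` of `F|s` and insert `[a₂,b₁),…,[a_k,b_{k-1})`. -/
noncomputable def Reduce (F : Finset (Set ℤ)) (k : ℕ) (a b : ℕ → ℤ) : Finset (Set ℤ) :=
  (F \ (Finset.range k).image (fun i => Set.Ico (a i) (b i))) ∪
    (Finset.range (k - 1)).image (fun i => Set.Ico (a (i + 1)) (b i))

/-- If `s` is a minimal bad interval for `F` with maximal intervals
`[a₁,b₁),…,[a_k,b_k)` of `F|s`, then `a_{j+1} < b_j` for `1 ≤ j < k`. -/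
theorem consecutive_maximals_overlap (F : Finset (Set ℤ)) (s : Set ℤ)
    (k : ℕ) (a b : ℕ → ℤ) (hmin : MinBad F s) (henum : MaxEnum F s k a b) :
    ∀ j, j + 1 < k → a (j + 1) < b j := by
  intro j hj
  by_contra h
  push_neg at h
  obtain ⟨⟨⟨A, B, hAB, hs⟩, hbad⟩, hminl⟩ := hmin
  obtain ⟨hk, hab, hmono, hmem, hcov⟩ := henum
  have hjk : j < k := Nat.lt_of_succ_lt hj
  have hsub : ∀ i, i < k → Set.Ico (a i) (b i) ⊆ s := fun i hi =>
    (Finset.mem_filter.mp (hmem i hi)).2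
  have hA : ∀ i, i < k → A ≤ a i := by
    intro i hi
    have := hsub i hi (Set.mem_Ico.mpr ⟨le_refl _, hab i hi⟩)
    rw [hs] at this; exact this.1
  have hB : ∀ i, i < k → b i ≤ B := by
    intro i hi
    have hm : (b i - 1) ∈ Set.Ico (a i) (b i) :=
      Set.mem_Ico.mpr ⟨by linarith [hab i hi], by linarith⟩
    have := hsub i hi hm
    rw [hs] at this
    linarith [this.2]
  have hbjB : b j < B := lt_of_lt_of_le (hmono j (j+1) (Nat.lt_succ_self j) hj).2 (hB _ hj)
  set t : Set ℤ := Set.Ico A (b j) with ht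
  have hAbj : A < b j := lt_of_le_of_lt (hA j hjk) (hab j hjk)
  have hts : t ⊆ s := by
    rw [hs]; exact Set.Ico_subset_Ico le_rfl (le_of_lt hbjB)
  have htne : t ≠ s := by
    intro he
    have h1 : (B - 1) ∈ s := by rw [hs]; exact Set.mem_Ico.mpr ⟨by linarith, by linarith⟩
    rw [← he] at h1
    have := (Set.mem_Ico.mp h1).2
    linarith
  obtain ⟨_, x, hxt, hnx⟩ := hminl t ⟨A, b j, hAbj, rfl⟩ hts htne
  have hxs : x ∈ s := hts hxt
  have h2 := hbad x hxs
  have hss : (Res F s).filter (fun f => x ∈ f) ⊆ (Res F t).filter (fun f => x ∈ f) := by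
    intro f hf
    rw [Finset.mem_filter] at hf ⊢
    obtain ⟨hfRs, hxf⟩ := hf
    have hfF : f ∈ F := (Finset.mem_filter.mp hfRs).1
    obtain ⟨i, hik, hfi⟩ := hcov f hfRs
    have hij : i ≤ j := by
      by_contra hgt
      push_neg at hgt
      have haj : a (j+1) ≤ a i := by
        rcases eq_or_lt_of_le (Nat.succ_le_of_lt hgt) with he | hl
        · rw [← he]
        · exact le_of_lt (hmono _ _ hl hik).1
      have hxi := hfi hxf
      have hx_lt : x < b j := (Set.mem_Ico.mp hxt).2
      have := hxi.1
      linarith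
    have hbij : b i ≤ b j := by
      rcases lt_or_eq_of_le hij with hl | he
      · exact le_of_lt (hmono i j hl hjk).2
      · rw [he]
    refine ⟨Finset.mem_filter.mpr ⟨hfF, ?_⟩, hxf⟩
    intro y hy
    have hyi := hfi hy
    exact Set.mem_Ico.mpr ⟨le_trans (hA i hik) hyi.1, lt_of_lt_of_le hyi.2 hbij⟩
  have hle : Nx (Res F s) x ≤ Nx (Res F t) x := Finset.card_le_card hss
  omega
end

section
/- If s is a minimal bad interval for F, then F ⊆ (F↓s)^∪, i.e., every member of F is a nonempty union of members of the reduced family F↓s. -/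
open scoped Classical

section FK
variable {F : Finset (Set ℤ)} {s : Set ℤ} {k : ℕ} {a b : ℕ → ℤ}

lemma fk_mono (henum : MaxEnum F s k a b) {i j : ℕ} (hij : i ≤ j) (hj : j < k) :
    a i ≤ a j ∧ b i ≤ b j := by
  rcases eq_or_lt_of_le hij with rfl | h
  · exact ⟨le_rfl, le_rfl⟩
  · exact ⟨(henum.2.2.1 i j h hj).1.le, (henum.2.2.1 i j h hj).2.le⟩

lemma fk_max_sub (henum : MaxEnum F s k a b) {i : ℕ} (hi : i < k) :
    Set.Ico (a i) (b i) ⊆ s :=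
  (Finset.mem_filter.mp (henum.2.2.2.1 i hi)).2

/-- consecutive maximal intervals overlap -/
lemma fk_overlap (hmin : MinBad F s) (henum : MaxEnum F s k a b)
    {i : ℕ} (hik : i + 1 < k) : a (i + 1) < b i := by
  by_contra hcon
  push_neg at hcon
  obtain ⟨α, β, hαβ, hs⟩ := hmin.1.1
  have hik' : i < k := by omega
  have hk1 : k - 1 < k := by omega
  have habi : a i < b i := henum.2.1 i hik'
  have hab0 : a 0 < b 0 := henum.2.1 0 (by omega)
  have ha0i : a 0 ≤ a i ∧ b 0 ≤ b i := fk_mono henum (Nat.zero_le i) hik'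
  -- b i < β
  have hbik : b i < b (k-1) := (henum.2.2.1 i (k-1) (by omega) hk1).2
  have hbk1 : b (k-1) ≤ β := by
    have h1 : b (k-1) - 1 ∈ Set.Ico (a (k-1)) (b (k-1)) := by
      rw [Set.mem_Ico]
      constructor <;> [linarith [henum.2.1 (k-1) hk1]; omega]
    have := fk_max_sub henum hk1 h1
    rw [hs, Set.mem_Ico] at this
    omega
  have hα0 : α ≤ a 0 := by
    have h1 : a 0 ∈ Set.Ico (a 0) (b 0) := ⟨le_rfl, hab0⟩
    have := fk_max_sub henum (show 0 < k by omega) h1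
    rw [hs, Set.mem_Ico] at this
    exact this.1
  set t : Set ℤ := Set.Ico (a 0) (b i) with ht
  have htitv : IsItv t := ⟨a 0, b i, by omega, rfl⟩
  have htsub : t ⊆ s := by
    rw [hs]
    exact Set.Ico_subset_Ico hα0 (by omega)
  have htne : t ≠ s := by
    intro h
    have h1 : β - 1 ∈ s := by rw [hs, Set.mem_Ico]; constructor <;> omega
    rw [← h, ht, Set.mem_Ico] at h1
    omega
  obtain ⟨-, x, hxt, hx1⟩ := hmin.2 t htitv htsub htne
  have hxs : x ∈ s := htsub hxt
  have hbad : 2 ≤ Nx (Res F s) x := hmin.1.2 x hxs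
  have hle : Nx (Res F s) x ≤ Nx (Res F t) x := by
    apply Finset.card_le_card
    intro g hg
    rw [Finset.mem_filter] at hg ⊢
    obtain ⟨hgRes, hxg⟩ := hg
    obtain ⟨j, hjk, hgj⟩ := henum.2.2.2.2 g hgRes
    have hxj : x ∈ Set.Ico (a j) (b j) := hgj hxg
    have hji : j ≤ i := by
      by_contra hcon2
      push_neg at hcon2
      have : a (i+1) ≤ a j := (fk_mono henum (by omega) hjk).1
      rw [ht, Set.mem_Ico] at hxt
      rw [Set.mem_Ico] at hxj
      omega
    have hmj := fk_mono henum hji hik'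
    refine ⟨Finset.mem_filter.mpr ⟨(Finset.mem_filter.mp hgRes).1, ?_⟩, hxg⟩
    exact hgj.trans (Set.Ico_subset_Ico (fk_mono henum (Nat.zero_le j) hjk).1 hmj.2)
  omega


lemma fk_point_cover (hmin : MinBad F s) (henum : MaxEnum F s k a b)
    {i : ℕ} (hi : i < k) {x : ℤ} (hx : x ∈ Set.Ico (a i) (b i)) :
    ∃ h ∈ Reduce F k a b, x ∈ h ∧ h ⊆ Set.Ico (a i) (b i) := by
  rw [Set.mem_Ico] at hx
  by_cases hc1 : i + 1 < k ∧ a (i+1) ≤ x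
  · refine ⟨Set.Ico (a (i+1)) (b i), ?_, ?_, ?_⟩
    · apply Finset.mem_union_right
      exact Finset.mem_image.mpr ⟨i, Finset.mem_range.mpr (by omega), rfl⟩
    · rw [Set.mem_Ico]; exact ⟨hc1.2, hx.2⟩
    · exact Set.Ico_subset_Ico ((henum.2.2.1 i (i+1) (by omega) hc1.1).1.le) le_rfl
  by_cases hc2 : 0 < i ∧ x < b (i-1)
  · refine ⟨Set.Ico (a i) (b (i-1)), ?_, ?_, ?_⟩
    · apply Finset.mem_union_right
      refine Finset.mem_image.mpr ⟨i-1, Finset.mem_range.mpr (by omega), ?_⟩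
      have h1 : i - 1 + 1 = i := by omega
      rw [h1]
    · rw [Set.mem_Ico]; exact ⟨hx.1, hc2.2⟩
    · exact Set.Ico_subset_Ico le_rfl (henum.2.2.1 (i-1) i (by omega) hi).2.le
  push_neg at hc1 hc2
  have honly : ∀ j < k, x ∈ Set.Ico (a j) (b j) → j = i := by
    intro j hjk hxj
    rw [Set.mem_Ico] at hxj
    rcases lt_trichotomy j i with h | h | h
    · have h0 : 0 < i := by omega
      have hb : b j ≤ b (i-1) := (fk_mono henum (by omega) (by omega)).2
      have := hc2 h0
      omega
    · exact h
    · have hik1 : i + 1 < k := by omega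
      have ha : a (i+1) ≤ a j := (fk_mono henum (by omega) hjk).1
      have := hc1 hik1
      omega
  have hxs : x ∈ s := fk_max_sub henum hi (Set.mem_Ico.mpr hx)
  have hbad := hmin.1.2 x hxs
  have hcard : 1 < ((Res F s).filter (fun f => x ∈ f)).card := by
    unfold Nx at hbad; omega
  obtain ⟨g, hg, hgne⟩ := Finset.exists_mem_ne hcard (Set.Ico (a i) (b i))
  rw [Finset.mem_filter] at hg
  obtain ⟨hgRes, hxg⟩ := hg
  obtain ⟨j, hjk, hgj⟩ := henum.2.2.2.2 g hgRes
  have hji : j = i := honly j hjk (hgj hxg)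
  subst hji
  refine ⟨g, ?_, hxg, hgj⟩
  apply Finset.mem_union_left
  rw [Finset.mem_sdiff]
  refine ⟨(Finset.mem_filter.mp hgRes).1, ?_⟩
  intro hmem
  obtain ⟨j', hj', hgj'⟩ := Finset.mem_image.mp hmem
  rw [Finset.mem_range] at hj'
  have hj'i : j' = j := honly j' hj' (by rw [hgj']; exact hxg)
  subst hj'i
  exact hgne hgj'.symm

end FK

/-- If `s` is a minimal bad interval for `F`, then every member of `F` is a nonempty
union of members of the reduced family `F↓s`. -/
theorem mem_reduce_sUnion (F : Finset (Set ℤ)) (s : Set ℤ)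
    (k : ℕ) (a b : ℕ → ℤ) (hmin : MinBad F s) (henum : MaxEnum F s k a b) :
    ∀ f ∈ F, ∃ H : Finset (Set ℤ), H ⊆ Reduce F k a b ∧ H.Nonempty ∧
      f = ⋃₀ ↑H := by
  intro f hf
  by_cases hfm : f ∈ (Finset.range k).image (fun i => Set.Ico (a i) (b i))
  · obtain ⟨i, hik, hfi⟩ := Finset.mem_image.mp hfm
    rw [Finset.mem_range] at hik
    subst hfi
    refine ⟨(Reduce F k a b).filter (fun h => h ⊆ Set.Ico (a i) (b i)),
      Finset.filter_subset _ _, ?_, ?_⟩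
    · have hai : a i ∈ Set.Ico (a i) (b i) := Set.mem_Ico.mpr ⟨le_rfl, henum.2.1 i hik⟩
      obtain ⟨h, hh, hxh, hhsub⟩ := fk_point_cover hmin henum hik hai
      exact ⟨h, Finset.mem_filter.mpr ⟨hh, hhsub⟩⟩
    · ext x
      simp only [Set.mem_sUnion, Finset.coe_filter, Set.mem_setOf_eq, Finset.mem_coe]
      constructor
      · intro hx
        obtain ⟨h, hh, hxh, hhsub⟩ := fk_point_cover hmin henum hik hx
        exact ⟨h, ⟨hh, hhsub⟩, hxh⟩
      · rintro ⟨h, ⟨hh, hhsub⟩, hxh⟩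
        exact hhsub hxh
  · refine ⟨{f}, ?_, Finset.singleton_nonempty f, ?_⟩
    · intro g hg
      rw [Finset.mem_singleton] at hg
      subst hg
      exact Finset.mem_union_left _ (Finset.mem_sdiff.mpr ⟨hf, hfm⟩)
    · simp
end

section
/- If s is a minimal bad interval for F and t is a good interval for F, then t is good for the reduced family F↓s. -/
open scoped Classical

/-!
Suppose `t = [c,d)` were bad for `F↓s`, and write `I_i = [a_i,b_i)` and `J_i = [a_{i+1},b_i)`.
At a point `y`, passing from `F|t` to `(F↓s)|t` removes the `I_i ⊆ t` through `y` and adds the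
`J_i ⊆ t` through `y`. Matching `J_i` with `I_i` fails only if `a_i < c`, and matching it with
`I_{i+1}` only if `d < b_{i+1}`; by monotonicity at most one `i` has `a_i < c ≤ a_{i+1}`. So the
multiplicity at `y` grows by at most one, and if it grows at all there is an `I_i ∋ y` with
`b_i ≤ d` leaving `t` on the left and an `I_{j+1}` leaving `t` on the right.

It must grow at the point of `t` witnessing goodness for `F`, so `A ≤ c` and `d < B` where
`s = [A,B)`: thus `[A,d)` is a proper subinterval of `s`, hence good for `F`. But every point of
`[A,d)` lies in two members of `F|[A,d)`: left of `c` because the members of `F|s` through it end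
in `[A,d)`, inside `t` by the count above, with the left-leaving `I_i` supplying a missing member.
-/

open Finset

section Counting

variable {F G : Finset (Set ℤ)} {T u : Set ℤ} {x : ℤ}

theorem Nx_Res_eq_card_filter (F : Finset (Set ℤ)) (T : Set ℤ) (x : ℤ) :
    Nx (Res F T) x = #(F.filter fun f => f ⊆ T ∧ x ∈ f) := by
  rw [Nx, Res, filter_filter]

theorem Nx_Res_le_Nx_Res_of_forall (h : ∀ f ∈ F, f ⊆ T → x ∈ f → f ⊆ u) :
    Nx (Res F T) x ≤ Nx (Res F u) x := by
  simp only [Nx_Res_eq_card_filter]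
  exact card_le_card (monotone_filter_right _ fun f hf hfT => ⟨h f hf hfT.1 hfT.2, hfT.2⟩)

theorem Nx_Res_mono (hTu : T ⊆ u) : Nx (Res F T) x ≤ Nx (Res F u) x :=
  Nx_Res_le_Nx_Res_of_forall fun _ _ hf _ => hf.trans hTu

theorem Nx_Res_add_one_le (hTu : T ⊆ u) {f : Set ℤ} (hf : f ∈ F) (hfu : f ⊆ u) (hfT : ¬f ⊆ T)
    (hxf : x ∈ f) : Nx (Res F T) x + 1 ≤ Nx (Res F u) x := by
  simp only [Nx_Res_eq_card_filter]
  refine card_lt_card ((Finset.ssubset_iff_of_subset ?_).2 ⟨f, ?_, ?_⟩)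
  · exact monotone_filter_right _ fun g _ hg => ⟨hg.1.trans hTu, hg.2⟩
  · exact mem_filter.2 ⟨hf, hfu, hxf⟩
  · exact fun hmem => hfT (mem_filter.1 hmem).2.1

theorem Nx_Res_union_le : Nx (Res (F ∪ G) T) x ≤ Nx (Res F T) x + Nx (Res G T) x := by
  simp only [Nx_Res_eq_card_filter, filter_union]
  exact card_union_le _ _

theorem Nx_Res_sdiff_add (hGF : G ⊆ F) :
    Nx (Res (F \ G) T) x + Nx (Res G T) x = Nx (Res F T) x := by
  simp only [Nx_Res_eq_card_filter]
  have hsdiff : (F \ G).filter (fun f => f ⊆ T ∧ x ∈ f) =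
      F.filter (fun f => f ⊆ T ∧ x ∈ f) \ G.filter (fun f => f ⊆ T ∧ x ∈ f) := by
    ext f; simp only [mem_filter, mem_sdiff]; tauto
  rw [hsdiff, card_sdiff_add_card_eq_card (filter_subset_filter _ hGF)]

end Counting

section Indices

variable (k : ℕ) (a b : ℕ → ℤ) (T : Set ℤ) (y : ℤ)

noncomputable def maxIdx : Finset ℕ :=
  (range k).filter fun i => Set.Ico (a i) (b i) ⊆ T ∧ y ∈ Set.Ico (a i) (b i)

noncomputable def overlapIdx : Finset ℕ :=
  (range (k - 1)).filter fun i => Set.Ico (a (i + 1)) (b i) ⊆ T ∧ y ∈ Set.Ico (a (i + 1)) (b i)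

variable {k a b y} {c d : ℤ} {i : ℕ}

theorem Ico_subset_Ico_and_mem_iff {p q : ℤ} :
    Set.Ico p q ⊆ Set.Ico c d ∧ y ∈ Set.Ico p q ↔ (c ≤ p ∧ q ≤ d) ∧ p ≤ y ∧ y < q :=
  and_congr_left fun hy => Set.Ico_subset_Ico_iff (hy.1.trans_lt hy.2)

theorem mem_maxIdx_Ico :
    i ∈ maxIdx k a b (Set.Ico c d) y ↔ i < k ∧ (c ≤ a i ∧ b i ≤ d) ∧ a i ≤ y ∧ y < b i := by
  rw [maxIdx, mem_filter, mem_range, Ico_subset_Ico_and_mem_iff]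

theorem mem_overlapIdx_Ico : i ∈ overlapIdx k a b (Set.Ico c d) y ↔
    i + 1 < k ∧ (c ≤ a (i + 1) ∧ b i ≤ d) ∧ a (i + 1) ≤ y ∧ y < b i := by
  rw [overlapIdx, mem_filter, mem_range, Ico_subset_Ico_and_mem_iff, Nat.lt_sub_iff_add_lt]

theorem card_overlapIdx_le_add_card_filter_lt (ha : MonotoneOn a (Set.Iio k)) :
    #(overlapIdx k a b (Set.Ico c d) y) ≤
      #(maxIdx k a b (Set.Ico c d) y) + #((overlapIdx k a b (Set.Ico c d) y).filter (a · < c)) := by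
  have hsub : (overlapIdx k a b (Set.Ico c d) y).filter (¬a · < c) ⊆
      maxIdx k a b (Set.Ico c d) y := by
    intro i hi
    rw [mem_filter, mem_overlapIdx_Ico] at hi
    have : a i ≤ a (i + 1) := ha (Set.mem_Iio.2 (by omega)) (Set.mem_Iio.2 hi.1.1) (by omega)
    rw [mem_maxIdx_Ico]
    omega
  have := card_filter_add_card_filter_not (s := overlapIdx k a b (Set.Ico c d) y) (a · < c)
  have := card_le_card hsub
  omega

theorem card_overlapIdx_le_add_card_filter_gt (hb : MonotoneOn b (Set.Iio k)) :
    #(overlapIdx k a b (Set.Ico c d) y) ≤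
      #(maxIdx k a b (Set.Ico c d) y) +
        #((overlapIdx k a b (Set.Ico c d) y).filter (fun i => d < b (i + 1))) := by
  have hsub :
      ((overlapIdx k a b (Set.Ico c d) y).filter (fun i => ¬d < b (i + 1))).image (· + 1) ⊆
        maxIdx k a b (Set.Ico c d) y := by
    intro j hj
    obtain ⟨i, hi, rfl⟩ := mem_image.1 hj
    rw [mem_filter, mem_overlapIdx_Ico] at hi
    have : b i ≤ b (i + 1) := hb (Set.mem_Iio.2 (by omega)) (Set.mem_Iio.2 hi.1.1) (by omega)
    rw [mem_maxIdx_Ico]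
    omega
  have := card_filter_add_card_filter_not (s := overlapIdx k a b (Set.Ico c d) y)
    (fun i => d < b (i + 1))
  have := card_le_card hsub
  rw [card_image_of_injective _ (add_left_injective 1)] at this
  omega

theorem card_filter_lt_le_one (ha : MonotoneOn a (Set.Iio k)) :
    #((overlapIdx k a b (Set.Ico c d) y).filter (a · < c)) ≤ 1 := by
  rw [card_le_one]
  intro i hi j hj
  simp only [mem_filter, mem_overlapIdx_Ico] at hi hj
  by_contra hne
  wlog hij : i < j generalizing i j
  · exact this j i hj hi (Ne.symm hne) (by omega)
  have : a (i + 1) ≤ a j := ha (Set.mem_Iio.2 (by omega)) (Set.mem_Iio.2 (by omega)) (by omega)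
  omega

theorem card_overlapIdx_le_succ (ha : MonotoneOn a (Set.Iio k)) :
    #(overlapIdx k a b (Set.Ico c d) y) ≤ #(maxIdx k a b (Set.Ico c d) y) + 1 :=
  (card_overlapIdx_le_add_card_filter_lt ha).trans
    (Nat.add_le_add_left (card_filter_lt_le_one ha) _)

theorem exists_of_card_maxIdx_lt (ha : MonotoneOn a (Set.Iio k)) (hb : MonotoneOn b (Set.Iio k))
    (h : #(maxIdx k a b (Set.Ico c d) y) < #(overlapIdx k a b (Set.Ico c d) y)) :
    (∃ i ∈ overlapIdx k a b (Set.Ico c d) y, a i < c) ∧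
      ∃ i ∈ overlapIdx k a b (Set.Ico c d) y, d < b (i + 1) := by
  have hlt := card_overlapIdx_le_add_card_filter_lt (b := b) (c := c) (d := d) (y := y) ha
  have hgt := card_overlapIdx_le_add_card_filter_gt (a := a) (c := c) (d := d) (y := y) hb
  rw [← filter_nonempty_iff, ← filter_nonempty_iff, ← card_pos, ← card_pos]
  omega

end Indices

theorem Nx_Res_reduce_add_card_maxIdx {F : Finset (Set ℤ)} {k : ℕ} {a b : ℕ → ℤ}
    (hF : ∀ i < k, Set.Ico (a i) (b i) ∈ F)
    (hinj : Set.InjOn (fun i => Set.Ico (a i) (b i)) (Set.Iio k)) (T : Set ℤ) (y : ℤ) :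
    Nx (Res (Reduce F k a b) T) y + #(maxIdx k a b T y) ≤
      Nx (Res F T) y + #(overlapIdx k a b T y) := by
  set R := (range k).image fun i => Set.Ico (a i) (b i)
  set N := (range (k - 1)).image fun i => Set.Ico (a (i + 1)) (b i)
  have hRF : R ⊆ F := by
    simpa [R, image_subset_iff] using hF
  have hR : Nx (Res R T) y = #(maxIdx k a b T y) := by
    rw [Nx_Res_eq_card_filter, filter_image, card_image_of_injOn]
    · unfold maxIdx; congr
    · exact hinj.mono fun i hi => by simp only [coe_filter, mem_range] at hi; exact hi.1
  have hN : Nx (Res N T) y ≤ #(overlapIdx k a b T y) := by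
    rw [Nx_Res_eq_card_filter, filter_image]
    refine card_image_le.trans_eq ?_
    unfold overlapIdx; congr
  have hunion : Nx (Res (Reduce F k a b) T) y ≤ Nx (Res (F \ R) T) y + Nx (Res N T) y :=
    Nx_Res_union_le
  have hsplit := Nx_Res_sdiff_add (T := T) (x := y) hRF
  omega

namespace MaxEnum

variable {F : Finset (Set ℤ)} {s : Set ℤ} {k : ℕ} {a b : ℕ → ℤ} {i : ℕ}

theorem left_lt_right (h : MaxEnum F s k a b) (hi : i < k) : a i < b i :=
  h.2.1 i hi

theorem strictMonoOn_left (h : MaxEnum F s k a b) : StrictMonoOn a (Set.Iio k) :=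
  fun i _ j hj hij => (h.2.2.1 i j hij hj).1

theorem strictMonoOn_right (h : MaxEnum F s k a b) : StrictMonoOn b (Set.Iio k) :=
  fun i _ j hj hij => (h.2.2.1 i j hij hj).2

theorem mem (h : MaxEnum F s k a b) (hi : i < k) : Set.Ico (a i) (b i) ∈ F :=
  (mem_filter.1 (h.2.2.2.1 i hi)).1

theorem subset (h : MaxEnum F s k a b) (hi : i < k) : Set.Ico (a i) (b i) ⊆ s :=
  (mem_filter.1 (h.2.2.2.1 i hi)).2

theorem exists_subset (h : MaxEnum F s k a b) {f : Set ℤ} (hf : f ∈ F) (hfs : f ⊆ s) :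
    ∃ i < k, f ⊆ Set.Ico (a i) (b i) :=
  h.2.2.2.2 f (mem_filter.2 ⟨hf, hfs⟩)

theorem injOn (h : MaxEnum F s k a b) : Set.InjOn (fun i => Set.Ico (a i) (b i)) (Set.Iio k) :=
  fun _ hi _ hj hij =>
    h.strictMonoOn_left.injOn hi hj ((Set.Ico_eq_Ico_iff (Or.inl (h.left_lt_right hi))).1 hij).1

variable {A B c d x : ℤ}

theorem le_left_and_right_le (h : MaxEnum F (Set.Ico A B) k a b) (hi : i < k) :
    A ≤ a i ∧ b i ≤ B :=
  (Set.Ico_subset_Ico_iff (h.left_lt_right hi)).1 (h.subset hi)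

theorem Nx_Res_le_Nx_Res_Ico_of_lt {m : ℕ} (h : MaxEnum F (Set.Ico A B) k a b) (hm : m + 1 < k)
    (hx : x < a (m + 1)) (hbm : b m ≤ d) :
    Nx (Res F (Set.Ico A B)) x ≤ Nx (Res F (Set.Ico A d)) x := by
  refine Nx_Res_le_Nx_Res_of_forall fun f hf hfs hxf => ?_
  obtain ⟨j, hj, hfj⟩ := h.exists_subset hf hfs
  have hjm : j < m + 1 :=
    (h.strictMonoOn_left.lt_iff_lt hj hm).1 ((hfj hxf).1.trans_lt hx)
  have hbj : b j ≤ b m :=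
    (h.strictMonoOn_right.le_iff_le hj (Set.mem_Iio.2 (by omega))).2 (by omega)
  exact hfj.trans (Set.Ico_subset_Ico (h.le_left_and_right_le hj).1 (hbj.trans hbm))

theorem two_le_Nx_Res_Ico_of_reduce (h : MaxEnum F (Set.Ico A B) k a b) (hAc : A ≤ c)
    (hbad : 2 ≤ Nx (Res (Reduce F k a b) (Set.Ico c d)) x) :
    2 ≤ Nx (Res F (Set.Ico A d)) x := by
  have hsub : Set.Ico c d ⊆ Set.Ico A d := Set.Ico_subset_Ico_left hAc
  have ha := h.strictMonoOn_left.monotoneOn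
  have key := Nx_Res_reduce_add_card_maxIdx (fun _ => h.mem) h.injOn (Set.Ico c d) x
  rcases le_or_gt #(overlapIdx k a b (Set.Ico c d) x) #(maxIdx k a b (Set.Ico c d) x)
    with hle | hlt
  · exact (show 2 ≤ Nx (Res F (Set.Ico c d)) x by omega).trans (Nx_Res_mono hsub)
  obtain ⟨⟨i, hi, hai⟩, -⟩ := exists_of_card_maxIdx_lt ha h.strictMonoOn_right.monotoneOn hlt
  have hsucc := card_overlapIdx_le_succ (b := b) (c := c) (d := d) (y := x) ha
  rw [mem_overlapIdx_Ico] at hi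
  have hai' : a i ≤ a (i + 1) := ha (Set.mem_Iio.2 (by omega)) (Set.mem_Iio.2 hi.1) (by omega)
  have hIi : Set.Ico (a i) (b i) ⊆ Set.Ico A d :=
    Set.Ico_subset_Ico (h.le_left_and_right_le (by omega)).1 hi.2.1.2
  have hIi_not : ¬Set.Ico (a i) (b i) ⊆ Set.Ico c d := fun hsub' =>
    absurd ((Set.Ico_subset_Ico_iff (h.left_lt_right (by omega))).1 hsub').1 (not_le.2 hai)
  calc 2 ≤ Nx (Res F (Set.Ico c d)) x + 1 := by omega
    _ ≤ Nx (Res F (Set.Ico A d)) x :=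
      Nx_Res_add_one_le hsub (h.mem (by omega)) hIi hIi_not ⟨by omega, hi.2.2.2⟩

end MaxEnum

/-- If `s` is a minimal bad interval for `F` and `t` is good for `F`, then `t` is
good for the reduced family `F↓s`. -/
theorem good_of_reduce (F : Finset (Set ℤ)) (s t : Set ℤ)
    (k : ℕ) (a b : ℕ → ℤ) (hmin : MinBad F s) (henum : MaxEnum F s k a b)
    (ht : Good F t) : Good (Reduce F k a b) t := by
  obtain ⟨⟨⟨A, B, -, rfl⟩, hsbad⟩, hsmin⟩ := hmin
  obtain ⟨⟨c, d, hcd, rfl⟩, x₀, hx₀, hx₀N⟩ := ht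
  refine ⟨⟨c, d, hcd, rfl⟩, ?_⟩
  by_contra! hbad
  have hexcess :
      #(maxIdx k a b (Set.Ico c d) x₀) < #(overlapIdx k a b (Set.Ico c d) x₀) := by
    have := Nx_Res_reduce_add_card_maxIdx (fun _ => henum.mem) henum.injOn (Set.Ico c d) x₀
    have := hbad x₀ hx₀
    omega
  obtain ⟨⟨m, hm, ham⟩, n, hn, hbn⟩ := exists_of_card_maxIdx_lt
    henum.strictMonoOn_left.monotoneOn henum.strictMonoOn_right.monotoneOn hexcess
  rw [mem_overlapIdx_Ico] at hm hn
  have hAc : A ≤ c := (henum.le_left_and_right_le (i := m) (by omega)).1.trans ham.le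
  have hdB : d < B := hbn.trans_le (henum.le_left_and_right_le hn.1).2
  obtain ⟨-, x, hx, hxN⟩ := hsmin (Set.Ico A d) ⟨A, d, by omega, rfl⟩
    (Set.Ico_subset_Ico_right hdB.le)
    (fun h => hdB.ne ((Set.Ico_eq_Ico_iff (Or.inl (by omega))).1 h).2)
  have : 2 ≤ Nx (Res F (Set.Ico A d)) x := by
    rcases lt_or_ge x c with hxc | hxc
    · exact (hsbad x ⟨hx.1, hx.2.trans hdB⟩).trans
        (henum.Nx_Res_le_Nx_Res_Ico_of_lt hm.1 (by omega) hm.2.1.2)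
    · exact henum.two_le_Nx_Res_Ico_of_reduce hAc (hbad x ⟨hxc, hx.2⟩)
  omega
end

section
/- If s is a minimal bad interval for F, then for every point x, N_x(F↓s) = N_x(F) − [x ∈ s]; that is, the number of members of the reduced family containing x equals the number of members of F containing x, minus one if x ∈ s. -/
open scoped Classical

/-- If `s` is a minimal bad interval for `F`, then for every point `x`,
`N_x (F↓s) = N_x F − [x ∈ s]`. -/
theorem nx_reduce (F : Finset (Set ℤ)) (s : Set ℤ)
    (k : ℕ) (a b : ℕ → ℤ) (hmin : MinBad F s) (henum : MaxEnum F s k a b) :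
    ∀ x : ℤ, Nx F x = Nx (Reduce F k a b) x + (if x ∈ s then 1 else 0) := by
  classical
  obtain ⟨⟨⟨α, β, hαβ, hsEq⟩, hbadpt⟩, hminGood⟩ := hmin
  obtain ⟨hk, hab, hmono, hmem, hmax⟩ := henum
  have hale : ∀ p q, p ≤ q → q < k → a p ≤ a q := by
    intro p q hpq hq
    rcases eq_or_lt_of_le hpq with h | h
    · rw [h]
    · exact le_of_lt (hmono p q h hq).1
  have hble : ∀ p q, p ≤ q → q < k → b p ≤ b q := by
    intro p q hpq hq
    rcases eq_or_lt_of_le hpq with h | h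
    · rw [h]
    · exact le_of_lt (hmono p q h hq).2
  have hMF : ∀ i, i < k → Set.Ico (a i) (b i) ∈ F := by
    intro i hi
    exact (Finset.mem_filter.mp (hmem i hi)).1
  have hMs : ∀ i, i < k → Set.Ico (a i) (b i) ⊆ s := by
    intro i hi
    exact (Finset.mem_filter.mp (hmem i hi)).2
  have hαa : ∀ i, i < k → α ≤ a i := by
    intro i hi
    have h1 : a i ∈ s := hMs i hi ⟨le_refl _, hab i hi⟩
    rw [hsEq] at h1
    exact h1.1
  have hbβ : ∀ i, i < k → b i ≤ β := by
    intro i hi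
    have h1 : b i - 1 ∈ s := hMs i hi ⟨by linarith [hab i hi], by linarith⟩
    rw [hsEq] at h1
    linarith [h1.2]
  have hcov : ∀ x : ℤ, x ∈ s → ∃ i, i < k ∧ x ∈ Set.Ico (a i) (b i) := by
    intro x hx
    have h2 := hbadpt x hx
    have hpos : 0 < (Finset.filter (fun f => x ∈ f) (Res F s)).card := by
      unfold Nx at h2; omega
    obtain ⟨f, hf⟩ := Finset.card_pos.mp hpos
    obtain ⟨hfR, hxf⟩ := Finset.mem_filter.mp hf
    obtain ⟨i, hik, hfi⟩ := hmax f hfR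
    exact ⟨i, hik, hfi hxf⟩
  -- key: if x is left of a (i+1), all members of F|s containing x lie in [α, b i)
  have hkey : ∀ i, i + 1 < k → ∀ x : ℤ, x ∈ s → x < b i → x < a (i + 1) →
      2 ≤ Nx (Res F (Set.Ico α (b i))) x := by
    intro i hik x hxs hxbi hxa
    have hsub : Finset.filter (fun f => x ∈ f) (Res F s) ⊆
        Finset.filter (fun f => x ∈ f) (Res F (Set.Ico α (b i))) := by
      intro f hf
      obtain ⟨hfRes, hxf⟩ := Finset.mem_filter.mp hf
      obtain ⟨hfF, hfs⟩ := Finset.mem_filter.mp hfRes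
      obtain ⟨j, hjk, hfj⟩ := hmax f hfRes
      have hxj := hfj hxf
      have hji : j ≤ i := by
        by_contra hc
        push_neg at hc
        have h1 : a (i + 1) ≤ a j := hale (i + 1) j hc hjk
        have h2 : a j ≤ x := hxj.1
        linarith
      refine Finset.mem_filter.mpr ⟨Finset.mem_filter.mpr ⟨hfF, ?_⟩, hxf⟩
      intro y hy
      have hyj := hfj hy
      exact ⟨le_trans (hαa j hjk) hyj.1, lt_of_lt_of_le hyj.2 (hble j i hji (by omega))⟩
    have h2 := hbadpt x hxs
    unfold Nx at h2 ⊢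
    exact le_trans h2 (Finset.card_le_card hsub)
  -- facts about the prefix interval t = [α, b i)
  have htfacts : ∀ i, i + 1 < k →
      IsItv (Set.Ico α (b i)) ∧ Set.Ico α (b i) ⊆ s ∧ Set.Ico α (b i) ≠ s := by
    intro i hik
    have habi : a i < b i := hab i (by omega)
    have hαbi : α < b i := lt_of_le_of_lt (hαa i (by omega)) habi
    have hbiβ : b i < β :=
      lt_of_lt_of_le (hmono i (i + 1) (by omega) hik).2 (hbβ (i + 1) hik)
    refine ⟨⟨α, b i, hαbi, rfl⟩, ?_, ?_⟩
    · rw [hsEq]; exact Set.Ico_subset_Ico le_rfl (le_of_lt hbiβ)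
    · intro hEq
      have h1 : b i ∈ s := by rw [hsEq]; exact ⟨le_of_lt hαbi, hbiβ⟩
      rw [← hEq] at h1
      exact absurd h1.2 (lt_irrefl _)
  -- consecutive maximal intervals overlap
  have hover : ∀ i, i + 1 < k → a (i + 1) < b i := by
    intro i hik
    by_contra h
    push_neg at h
    obtain ⟨htI, hts, htne⟩ := htfacts i hik
    obtain ⟨-, x, hxt, hx1⟩ := hminGood _ htI hts htne
    have h2 := hkey i hik x (hts hxt) hxt.2 (lt_of_lt_of_le hxt.2 h)
    omega
  -- the inserted intervals are not members of F
  have hGnot : ∀ i, i + 1 < k → Set.Ico (a (i + 1)) (b i) ∉ F := by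
    intro i hik hgF
    obtain ⟨htI, hts, htne⟩ := htfacts i hik
    obtain ⟨-, x, hxt, hx1⟩ := hminGood _ htI hts htne
    have h2 : 2 ≤ Nx (Res F (Set.Ico α (b i))) x := by
      rcases lt_or_ge x (a (i + 1)) with hx | hx
      · exact hkey i hik x (hts hxt) hxt.2 hx
      · have haai : a i < a (i + 1) := (hmono i (i + 1) (by omega) hik).1
        have hMt : Set.Ico (a i) (b i) ∈ Res F (Set.Ico α (b i)) := by
          refine Finset.mem_filter.mpr ⟨hMF i (by omega), ?_⟩
          exact Set.Ico_subset_Ico (hαa i (by omega)) le_rfl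
        have hgt : Set.Ico (a (i + 1)) (b i) ∈ Res F (Set.Ico α (b i)) := by
          refine Finset.mem_filter.mpr ⟨hgF, ?_⟩
          exact Set.Ico_subset_Ico (le_trans (hαa i (by omega)) (le_of_lt haai)) le_rfl
        have hxM : x ∈ Set.Ico (a i) (b i) := ⟨le_trans (le_of_lt haai) hx, hxt.2⟩
        have hxg : x ∈ Set.Ico (a (i + 1)) (b i) := ⟨hx, hxt.2⟩
        have hne : Set.Ico (a i) (b i) ≠ Set.Ico (a (i + 1)) (b i) := by
          intro hEq
          have h1 : a i ∈ Set.Ico (a i) (b i) := ⟨le_rfl, hab i (by omega)⟩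
          rw [hEq] at h1
          linarith [h1.1]
        have hpair : ({Set.Ico (a i) (b i), Set.Ico (a (i + 1)) (b i)} : Finset (Set ℤ)) ⊆
            Finset.filter (fun f => x ∈ f) (Res F (Set.Ico α (b i))) := by
          intro g hg
          rcases Finset.mem_insert.mp hg with rfl | hg
          · exact Finset.mem_filter.mpr ⟨hMt, hxM⟩
          · rw [Finset.mem_singleton.mp hg]
            exact Finset.mem_filter.mpr ⟨hgt, hxg⟩
        have hc2 : 2 ≤ (Finset.filter (fun f => x ∈ f) (Res F (Set.Ico α (b i)))).card := by
          have := Finset.card_le_card hpair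
          rwa [Finset.card_pair hne] at this
        unfold Nx
        exact hc2
    omega
  -- counting
  intro x
  set Mset : Finset (Set ℤ) := (Finset.range k).image (fun i => Set.Ico (a i) (b i)) with hMset
  set Nset : Finset (Set ℤ) :=
    (Finset.range (k - 1)).image (fun i => Set.Ico (a (i + 1)) (b i)) with hNset
  have hMsubF : Mset ⊆ F := by
    rw [hMset]
    exact Finset.image_subset_iff.mpr fun i hi => hMF i (Finset.mem_range.mp hi)
  set fM := (Finset.range k).filter (fun i => x ∈ Set.Ico (a i) (b i)) with hfM
  set fN := (Finset.range (k - 1)).filter (fun i => x ∈ Set.Ico (a (i + 1)) (b i)) with hfN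
  have hMinj : ∀ p, p < k → ∀ q, q < k →
      Set.Ico (a p) (b p) = Set.Ico (a q) (b q) → p = q := by
    intro p hp q hq hEq
    rcases lt_trichotomy p q with h | h | h
    · exfalso
      have h1 : a p ∈ Set.Ico (a p) (b p) := ⟨le_rfl, hab p hp⟩
      rw [hEq] at h1
      linarith [h1.1, (hmono p q h hq).1]
    · exact h
    · exfalso
      have h1 : a q ∈ Set.Ico (a q) (b q) := ⟨le_rfl, hab q hq⟩
      rw [← hEq] at h1
      linarith [h1.1, (hmono q p h hp).1]
  have hNinj : ∀ p, p < k - 1 → ∀ q, q < k - 1 →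
      Set.Ico (a (p + 1)) (b p) = Set.Ico (a (q + 1)) (b q) → p = q := by
    intro p hp q hq hEq
    rcases lt_trichotomy p q with h | h | h
    · exfalso
      have h1 : a (p + 1) ∈ Set.Ico (a (p + 1)) (b p) := ⟨le_rfl, hover p (by omega)⟩
      rw [hEq] at h1
      have := (hmono (p + 1) (q + 1) (by omega) (by omega)).1
      linarith [h1.1]
    · exact h
    · exfalso
      have h1 : a (q + 1) ∈ Set.Ico (a (q + 1)) (b q) := ⟨le_rfl, hover q (by omega)⟩
      rw [← hEq] at h1
      have := (hmono (q + 1) (p + 1) (by omega) (by omega)).1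
      linarith [h1.1]
  have hMcard : (Mset.filter (fun f => x ∈ f)).card = fM.card := by
    have h3 : Mset.filter (fun f => x ∈ f) = fM.image (fun i => Set.Ico (a i) (b i)) := by
      rw [hMset, hfM]
      ext g
      simp only [Finset.mem_filter, Finset.mem_image]
      constructor
      · rintro ⟨⟨i, hi, rfl⟩, hx⟩
        exact ⟨i, ⟨hi, hx⟩, rfl⟩
      · rintro ⟨i, ⟨hi, hx⟩, rfl⟩
        exact ⟨⟨i, hi, rfl⟩, hx⟩
    rw [h3]
    exact Finset.card_image_of_injOn fun p hp q hq h =>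
      hMinj p (Finset.mem_range.mp (Finset.mem_of_mem_filter _ hp)) q
        (Finset.mem_range.mp (Finset.mem_of_mem_filter _ hq)) h
  have hNcard : (Nset.filter (fun f => x ∈ f)).card = fN.card := by
    have h3 : Nset.filter (fun f => x ∈ f) = fN.image (fun i => Set.Ico (a (i + 1)) (b i)) := by
      rw [hNset, hfN]
      ext g
      simp only [Finset.mem_filter, Finset.mem_image]
      constructor
      · rintro ⟨⟨i, hi, rfl⟩, hx⟩
        exact ⟨i, ⟨hi, hx⟩, rfl⟩
      · rintro ⟨i, ⟨hi, hx⟩, rfl⟩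
        exact ⟨⟨i, hi, rfl⟩, hx⟩
    rw [h3]
    exact Finset.card_image_of_injOn fun p hp q hq h =>
      hNinj p (Finset.mem_range.mp (Finset.mem_of_mem_filter _ hp)) q
        (Finset.mem_range.mp (Finset.mem_of_mem_filter _ hq)) h
  have hNxF : Nx F x = (((F \ Mset).filter (fun f => x ∈ f)).card) + fM.card := by
    have h1 : (F \ Mset) ∪ Mset = F := Finset.sdiff_union_of_subset hMsubF
    calc Nx F x = (((F \ Mset) ∪ Mset).filter (fun f => x ∈ f)).card := by
          rw [h1]; rfl
      _ = ((F \ Mset).filter (fun f => x ∈ f)).card + (Mset.filter (fun f => x ∈ f)).card := by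
          rw [Finset.filter_union]
          exact Finset.card_union_of_disjoint
            (Finset.disjoint_filter_filter Finset.sdiff_disjoint)
      _ = _ := by rw [hMcard]
  have hNdisj : Disjoint (F \ Mset) Nset := by
    rw [Finset.disjoint_left]
    intro g hg hgN
    obtain ⟨i, hi, rfl⟩ := Finset.mem_image.mp hgN
    have hik : i + 1 < k := by
      have := Finset.mem_range.mp hi
      omega
    exact hGnot i hik (Finset.mem_sdiff.mp hg).1
  have hNxR : Nx (Reduce F k a b) x =
      (((F \ Mset).filter (fun f => x ∈ f)).card) + fN.card := by
    have h1 : Reduce F k a b = (F \ Mset) ∪ Nset := rfl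
    calc Nx (Reduce F k a b) x
        = (((F \ Mset) ∪ Nset).filter (fun f => x ∈ f)).card := by rw [h1]; rfl
      _ = ((F \ Mset).filter (fun f => x ∈ f)).card + (Nset.filter (fun f => x ∈ f)).card := by
          rw [Finset.filter_union]
          exact Finset.card_union_of_disjoint (Finset.disjoint_filter_filter hNdisj)
      _ = _ := by rw [hNcard]
  rw [hNxF, hNxR]
  have hmain : fM.card = fN.card + (if x ∈ s then 1 else 0) := by
    by_cases hxs : x ∈ s
    · simp only [hxs, if_true]
      have hmem' : ∀ j, j ∈ fM ↔ j < k ∧ a j ≤ x ∧ x < b j := by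
        intro j
        rw [hfM]
        simp [Finset.mem_filter, Finset.mem_range, Set.mem_Ico, and_assoc]
      have hfMne : fM.Nonempty := by
        obtain ⟨i, hik, hxi⟩ := hcov x hxs
        exact ⟨i, (hmem' i).mpr ⟨hik, hxi.1, hxi.2⟩⟩
      set m := fM.min' hfMne with hm
      set r := fM.max' hfMne with hr
      have hmmem := (hmem' m).mp (fM.min'_mem hfMne)
      have hrmem := (hmem' r).mp (fM.max'_mem hfMne)
      have hmr : m ≤ r := fM.min'_le _ (fM.max'_mem hfMne)
      have hfM_eq : ∀ l, l ∈ fM ↔ m ≤ l ∧ l ≤ r := by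
        intro l
        constructor
        · exact fun h => ⟨fM.min'_le _ h, fM.le_max' _ h⟩
        · rintro ⟨h1, h2⟩
          refine (hmem' l).mpr ⟨by omega, ?_, ?_⟩
          · exact le_trans (hale l r h2 hrmem.1) hrmem.2.1
          · exact lt_of_lt_of_le hmmem.2.2 (hble m l h1 (by omega))
      have hfN_eq : ∀ l, l ∈ fN ↔ m ≤ l ∧ l < r := by
        intro l
        rw [hfN]
        simp only [Finset.mem_filter, Finset.mem_range, Set.mem_Ico]
        constructor
        · rintro ⟨hlk, hax, hxb⟩
          have hl1 : l + 1 < k := by omega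
          have hlin : l ∈ fM := (hmem' l).mpr
            ⟨by omega, le_trans (le_of_lt (hmono l (l + 1) (by omega) hl1).1) hax, hxb⟩
          have hl1in : l + 1 ∈ fM := (hmem' (l + 1)).mpr
            ⟨hl1, hax, lt_trans hxb (hmono l (l + 1) (by omega) hl1).2⟩
          have h1 := fM.min'_le _ hlin
          have h2 := fM.le_max' _ hl1in
          omega
        · rintro ⟨h1, h2⟩
          have hlin : l ∈ fM := (hfM_eq l).mpr ⟨h1, by omega⟩
          have hl1in : l + 1 ∈ fM := (hfM_eq (l + 1)).mpr ⟨by omega, by omega⟩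
          have ha := (hmem' (l + 1)).mp hl1in
          have hb := (hmem' l).mp hlin
          exact ⟨by omega, ha.2.1, hb.2.2⟩
      have heq1 : fM = Finset.Icc m r := by
        ext l
        rw [hfM_eq, Finset.mem_Icc]
      have heq2 : fN = Finset.Ico m r := by
        ext l
        rw [hfN_eq, Finset.mem_Ico]
      rw [heq1, heq2, Nat.card_Icc, Nat.card_Ico]
      omega
    · simp only [hxs, if_false]
      have h1 : fM = ∅ := by
        rw [hfM]
        refine Finset.filter_eq_empty_iff.mpr fun i hi hx => ?_
        exact hxs (hMs i (Finset.mem_range.mp hi) hx)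
      have h2 : fN = ∅ := by
        rw [hfN]
        refine Finset.filter_eq_empty_iff.mpr fun i hi hx => ?_
        have hik : i + 1 < k := by
          have := Finset.mem_range.mp hi; omega
        have haai : a i < a (i + 1) := (hmono i (i + 1) (by omega) hik).1
        exact hxs (hMs i (by omega) ⟨le_trans (le_of_lt haai) hx.1, hx.2⟩)
      rw [h1, h2]
      simp
  omega
end

section
/- None of the new intervals [a_{j+1}, b_j), 1 ≤ j < k, introduced by reducing F in a minimal bad interval s are already members of F. -/
open scoped Classical

/-- None of the new intervals `[a_{j+1}, b_j)` introduced by reducing `F` in a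
minimal bad interval `s` are already members of `F`. -/
theorem new_intervals_not_mem (F : Finset (Set ℤ)) (s : Set ℤ)
    (k : ℕ) (a b : ℕ → ℤ) (hmin : MinBad F s) (henum : MaxEnum F s k a b) :
    ∀ j, j + 1 < k → Set.Ico (a (j + 1)) (b j) ∉ F := by
  intro j hjk hc
  obtain ⟨⟨⟨A, B, hAB, hsEq⟩, hbad2⟩, hminG⟩ := hmin
  obtain ⟨hk, hab, hmono, hmem, hcov⟩ := henum
  subst hsEq
  have hj : j < k := Nat.lt_of_succ_lt hjk
  have hajbj : a j < b j := hab j hj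
  have haa : a j < a (j + 1) := (hmono j (j + 1) (lt_add_one j) hjk).1
  have hbb : b j < b (j + 1) := (hmono j (j + 1) (lt_add_one j) hjk).2
  -- endpoints of maximal intervals lie in s
  have hsub : ∀ i, i < k → Set.Ico (a i) (b i) ⊆ Set.Ico A B := by
    intro i hik
    exact (Finset.mem_filter.mp (hmem i hik)).2
  have hAa : ∀ i, i < k → A ≤ a i := by
    intro i hik
    exact (hsub i hik ⟨le_refl _, hab i hik⟩).1
  have hbB : ∀ i, i < k → b i ≤ B := by
    intro i hik
    have h1 : b i - 1 ∈ Set.Ico (a i) (b i) := ⟨by linarith [hab i hik], by linarith⟩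
    have := (hsub i hik h1).2
    linarith
  have hbjB : b j < B := lt_of_lt_of_le hbb (hbB (j + 1) hjk)
  have hAaj : A ≤ a j := hAa j hj
  have hAbj : A < b j := lt_of_le_of_lt hAaj hajbj
  set t : Set ℤ := Set.Ico A (b j) with ht
  have htitv : IsItv t := ⟨A, b j, hAbj, rfl⟩
  have hts : t ⊆ Set.Ico A B := Set.Ico_subset_Ico_right hbjB.le
  have htne : t ≠ Set.Ico A B := by
    intro h
    have hbmem : b j ∈ Set.Ico A B := ⟨hAbj.le, hbjB⟩
    rw [← h] at hbmem
    exact lt_irrefl _ hbmem.2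
  obtain ⟨_, x, hxt, hx1⟩ := hminG t htitv hts htne
  have h2 : 2 ≤ Nx (Res F t) x := by
    rcases lt_or_ge x (a (j + 1)) with hlt | hge
    · -- case x < a (j+1): inherit badness of s
      have hb2 := hbad2 x (hts hxt)
      refine le_trans hb2 (Finset.card_le_card ?_)
      intro f hf
      rw [Finset.mem_filter] at hf ⊢
      obtain ⟨hfRes, hxf⟩ := hf
      obtain ⟨i, hik, hfi⟩ := hcov f hfRes
      have hfF : f ∈ F := (Finset.mem_filter.mp hfRes).1
      have hax : a i ≤ x := (hfi hxf).1
      have hij : i ≤ j := by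
        by_contra hcon
        push_neg at hcon
        have hji : a (j + 1) ≤ a i := by
          rcases Nat.lt_or_ge (j + 1) i with h | h
          · exact ((hmono (j + 1) i h hik).1).le
          · have : i = j + 1 := le_antisymm h hcon
            rw [this]
        linarith
      have hbij : b i ≤ b j := by
        rcases Nat.lt_or_ge i j with h | h
        · exact ((hmono i j h hj).2).le
        · have : i = j := le_antisymm hij h
          rw [this]
      refine ⟨Finset.mem_filter.mpr ⟨hfF, ?_⟩, hxf⟩
      exact subset_trans hfi (Set.Ico_subset_Ico (hAa i hik) hbij)
    · -- case a (j+1) ≤ x: both c and [a j, b j) contain x and lie in t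
      have hxbj : x < b j := hxt.2
      have hcmem : Set.Ico (a (j + 1)) (b j) ∈ (Res F t).filter (fun f => x ∈ f) := by
        refine Finset.mem_filter.mpr ⟨Finset.mem_filter.mpr ⟨hc, ?_⟩, ⟨hge, hxbj⟩⟩
        exact Set.Ico_subset_Ico (le_trans hAaj haa.le) le_rfl
      have hmmem : Set.Ico (a j) (b j) ∈ (Res F t).filter (fun f => x ∈ f) := by
        refine Finset.mem_filter.mpr ⟨Finset.mem_filter.mpr
          ⟨(Finset.mem_filter.mp (hmem j hj)).1, ?_⟩, ⟨by linarith, hxbj⟩⟩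
        exact Set.Ico_subset_Ico hAaj le_rfl
      have hne : Set.Ico (a (j + 1)) (b j) ≠ Set.Ico (a j) (b j) := by
        intro h
        have haj : a j ∈ Set.Ico (a j) (b j) := ⟨le_refl _, hajbj⟩
        rw [← h] at haj
        linarith [haj.1]
      exact Finset.one_lt_card.mpr ⟨_, hcmem, _, hmmem, hne⟩
  unfold Nx at hx1 h2
  omega
end
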